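/- For l ∈ ℝ⁶ with coordinates l_ij indexed by two-element subsets {i,j} of {1,2,3,4} (with l_ji = l_ij), define for {i,j,k,h} = {1,2,3,4} the dihedral angle α_ij(l) to be the inner angle of the generalized Euclidean triangle of edge lengths e^{(l_ij+l_kh)/2}, e^{(l_ik+l_jh)/2}, e^{(l_ih+l_jk)/2} opposite the edge of length e^{(l_ij+l_kh)/2}. Then each function α_ij : ℝ⁶ → [0, π] is continuous, and the volume function vol(l) = (1/2) Σ_{i<j} Λ(α_ij(l)) is continuous and nonnegative on all of ℝ⁶. -/

import Mathlib

/-- The Lobachevsky function `Λ(t) = -∫₀ᵗ log |2 sin s| ds`. -/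
noncomputable def Lob (t : ℝ) : ℝ := -∫ s in (0 : ℝ)..t, Real.log |2 * Real.sin s|

/-- The inner angle, opposite the edge of length `x i`, of the generalized Euclidean
triangle of edge lengths `x 0, x 1, x 2` (clamped arccos convention). -/
noncomputable def ang (i : Fin 3) (x : Fin 3 → ℝ) : ℝ :=
  Real.arccos (((x (i + 1)) ^ 2 + (x (i + 2)) ^ 2 - (x i) ^ 2) / (2 * x (i + 1) * x (i + 2)))

/- We index the six edges of a tetrahedron on vertices `{1,2,3,4}` by `Fin 6`, in the
order `l₁₂, l₁₃, l₁₄, l₂₃, l₂₄, l₃₄`; the edge opposite to edge `m` is edge `5 - m`,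
so the three quads (pairs of opposite edges) are `(0,5), (1,4), (2,3)`. -/

/-- Half the sum of the lengths of the two opposite edges in the `m`-th quad. -/
noncomputable def quadLen (l : Fin 6 → ℝ) (m : Fin 3) : ℝ :=
  (l ⟨m.val, by have := m.isLt; omega⟩ + l ⟨5 - m.val, by have := m.isLt; omega⟩) / 2

/-- The quad containing the `m`-th edge. -/
def quadOf (m : Fin 6) : Fin 3 := ⟨min m.val (5 - m.val), by have := m.isLt; omega⟩

/-- The dihedral angle of the generalized decorated tetrahedron of edge lengths `l`
at the `m`-th edge: the inner angle of the generalized Euclidean triangle of edge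
lengths `exp (quadLen l 0), exp (quadLen l 1), exp (quadLen l 2)` opposite the edge
coming from the quad containing `m`. -/
noncomputable def dihed (m : Fin 6) (l : Fin 6 → ℝ) : ℝ :=
  ang (quadOf m) (fun i => Real.exp (quadLen l i))

/-- The volume of the generalized decorated tetrahedron of edge lengths `l`. -/
noncomputable def tvol (l : Fin 6 → ℝ) : ℝ := (1 / 2) * ∑ m : Fin 6, Lob (dihed m l)

/-!
Each dihedral angle is `arccos` of a continuous function of `l` (the exponentials keep the
denominators positive), and `Λ` is continuous because `log |2 sin|` is locally integrable.
Opposite edges carry the same angle, so `vol l = Λ α + Λ β + Λ γ` for the three angles of one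
generalized Euclidean triangle; these sum to `π`, also when the triangle is degenerate.
It remains to see `Λ α + Λ β + Λ γ ≥ 0` when `α, β, γ ≥ 0` and `α + β + γ = π`. Say `β ≤ γ`.
Since `∫₀^π log |2 sin s| ds = 0`, `Λ γ = -Λ (α + β)`; and `Λ (α + β) ≤ Λ α + Λ β` because
`Λ α + Λ β - Λ (α + β) = ∫₀^β (log |2 sin (s + α)| - log |2 sin s|) ds` and
`sin s ≤ sin (s + α)` for `0 ≤ s ≤ β`, as `α + 2β ≤ π`.
-/

open Real Set intervalIntegral MeasureTheory

theorem intervalIntegrable_log_abs_two_mul_sin (a b : ℝ) :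
    IntervalIntegrable (fun s => log |2 * sin s|) volume a b := by
  simpa only [Real.norm_eq_abs] using
    ((analyticOnNhd_const (v := (2 : ℝ))).mul analyticOnNhd_sin).meromorphicOn
      |>.intervalIntegrable_log_norm

theorem continuous_Lob : Continuous Lob :=
  (continuous_primitive intervalIntegrable_log_abs_two_mul_sin 0).neg

theorem integral_log_abs_two_mul_sin_zero_pi : ∫ s in 0..π, log |2 * sin s| = 0 := by
  have h : EqOn (fun s => log |2 * sin s|) (fun s => log 2 + log (sin s)) (Ioo 0 π) :=
    fun s hs => by
      have := sin_pos_of_pos_of_lt_pi hs.1 hs.2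
      change log |2 * sin s| = log 2 + log (sin s)
      rw [abs_of_pos (by positivity), log_mul two_ne_zero this.ne']
  rw [integral_congr_Ioo_of_le pi_pos.le h,
    integral_add intervalIntegrable_const (g := fun s => log (sin s)) intervalIntegrable_log_sin,
    integral_log_sin_zero_pi, intervalIntegral.integral_const, smul_eq_mul, sub_zero]
  ring

theorem Lob_pi_sub (x : ℝ) : Lob (π - x) = -Lob x := by
  have hsplit := integral_add_adjacent_intervals (intervalIntegrable_log_abs_two_mul_sin 0 (π - x))
    (intervalIntegrable_log_abs_two_mul_sin (π - x) π)
  have hrefl : ∫ s in (π - x)..π, log |2 * sin s| = ∫ s in 0..x, log |2 * sin s| := by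
    simpa [sin_pi_sub] using
      (integral_comp_sub_left (fun s => log |2 * sin s|) π (a := 0) (b := x)).symm
  rw [integral_log_abs_two_mul_sin_zero_pi, hrefl] at hsplit
  simp only [Lob]
  linarith

theorem sin_le_sin_add {a s : ℝ} (ha : 0 ≤ a) (hs : 0 ≤ s) (h : 2 * s + a ≤ π) :
    sin s ≤ sin (s + a) := by
  have hd := sin_sub_sin (s + a) s
  rw [show (s + a - s) / 2 = a / 2 by ring, show (s + a + s) / 2 = s + a / 2 by ring] at hd
  have := sin_nonneg_of_nonneg_of_le_pi (by linarith : 0 ≤ a / 2) (by linarith)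
  have := cos_nonneg_of_mem_Icc (x := s + a / 2) ⟨by linarith, by linarith⟩
  nlinarith

theorem Lob_add_le {a b : ℝ} (ha : 0 ≤ a) (hb : 0 ≤ b) (hab : a + 2 * b ≤ π) :
    Lob (a + b) ≤ Lob a + Lob b := by
  have hsplit := integral_add_adjacent_intervals (intervalIntegrable_log_abs_two_mul_sin 0 a)
    (intervalIntegrable_log_abs_two_mul_sin a (a + b))
  have hshift : ∫ s in a..(a + b), log |2 * sin s| = ∫ s in 0..b, log |2 * sin (s + a)| := by
    simpa [add_comm] using
      (integral_comp_add_right (fun s => log |2 * sin s|) a (a := 0) (b := b)).symm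
  have hmono : ∫ s in 0..b, log |2 * sin s| ≤ ∫ s in 0..b, log |2 * sin (s + a)| := by
    refine integral_mono_on_of_le_Ioo hb (intervalIntegrable_log_abs_two_mul_sin 0 b) ?_ ?_
    · simpa using (intervalIntegrable_log_abs_two_mul_sin a (a + b)).comp_add_right a
    · intro s hs
      have hsin := sin_pos_of_pos_of_lt_pi hs.1 (by linarith [hs.2])
      have hle := sin_le_sin_add ha hs.1.le (by linarith [hs.2])
      rw [abs_of_pos (by positivity), abs_of_pos (by linarith)]
      exact log_le_log (by positivity) (by linarith)
  simp only [Lob]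
  linarith

theorem Lob_add_Lob_add_Lob_nonneg {a b c : ℝ} (ha : 0 ≤ a) (hb : 0 ≤ b) (hc : 0 ≤ c)
    (habc : a + b + c = π) : 0 ≤ Lob a + Lob b + Lob c := by
  rcases le_total b c with hbc | hcb
  · have := Lob_add_le ha hb (by linarith)
    rw [show c = π - (a + b) by linarith, Lob_pi_sub]
    linarith
  · have := Lob_add_le ha hc (by linarith)
    rw [show b = π - (a + c) by linarith, Lob_pi_sub]
    linarith

theorem arccos_add_arccos_eq_pi_sub_arccos {x y z : ℝ} (hx : x ∈ Icc (-1) 1)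
    (hy : y ∈ Icc (-1) 1) (hxy : 0 ≤ x + y) (h : x * y - √(1 - x ^ 2) * √(1 - y ^ 2) = -z) :
    arccos x + arccos y = π - arccos z := by
  have hle : arccos x ≤ π - arccos y := by
    rw [← arccos_neg]
    exact arccos_le_arccos (by linarith)
  have hcos : cos (π - (arccos x + arccos y)) = z := by
    rw [cos_pi_sub, cos_add, cos_arccos hx.1 hx.2, cos_arccos hy.1 hy.2, sin_arccos, sin_arccos, h,
      neg_neg]
  rw [← hcos, arccos_cos (by linarith) (by linarith [arccos_nonneg x, arccos_nonneg y])]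
  ring

/-- Law of cosines: the cosine of the angle opposite the side `a`. -/
noncomputable def cosOfSides (a b c : ℝ) : ℝ := (b ^ 2 + c ^ 2 - a ^ 2) / (2 * b * c)

theorem arccos_cosOfSides_eq_pi {a b c : ℝ} (hb : 0 < b) (hc : 0 < c) (h : b + c ≤ a) :
    arccos (cosOfSides a b c) = π := by
  rw [cosOfSides, arccos_eq_pi, div_le_iff₀ (by positivity)]
  nlinarith

theorem arccos_cosOfSides_eq_zero {a b c : ℝ} (hb : 0 < b) (hc : 0 < c)
    (h : a ^ 2 ≤ (b - c) ^ 2) :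
    arccos (cosOfSides a b c) = 0 := by
  rw [cosOfSides, arccos_eq_zero, le_div_iff₀ (by positivity)]
  nlinarith

theorem cosOfSides_mem_Icc {a b c : ℝ} (hb : 0 < b) (hc : 0 < c) (hbc : a ≤ b + c)
    (hab : b ≤ a + c) (hac : c ≤ a + b) : cosOfSides a b c ∈ Icc (-1) 1 := by
  rw [cosOfSides, mem_Icc, le_div_iff₀ (by positivity), div_le_one (by positivity)]
  constructor <;> nlinarith

theorem sqrt_one_sub_cosOfSides_sq {a b c : ℝ} (hb : 0 < b) (hc : 0 < c) :
    √(1 - cosOfSides a b c ^ 2) =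
      √((a + b + c) * (b + c - a) * (c + a - b) * (a + b - c)) / (2 * b * c) := by
  have h : 1 - cosOfSides a b c ^ 2 =
      (a + b + c) * (b + c - a) * (c + a - b) * (a + b - c) / (2 * b * c) ^ 2 := by
    rw [cosOfSides]
    field_simp
    ring
  rw [h, sqrt_div' _ (by positivity), sqrt_sq (by positivity)]

theorem arccos_cosOfSides_cyclic_sum_of_lt {a b c : ℝ} (ha : 0 < a) (hb : 0 < b) (hc : 0 < c)
    (hbc : a < b + c) (hca : b < c + a) (hab : c < a + b) :
    arccos (cosOfSides a b c) + arccos (cosOfSides b c a) + arccos (cosOfSides c a b) = π := by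
  have hH : 0 ≤ (a + b + c) * (b + c - a) * (c + a - b) * (a + b - c) := by
    have := mul_pos (mul_pos (mul_pos (by linarith : 0 < a + b + c) (sub_pos.2 hbc))
      (sub_pos.2 hca)) (sub_pos.2 hab)
    positivity
  have hsum : 0 ≤ cosOfSides a b c + cosOfSides b c a := by
    have h : cosOfSides a b c + cosOfSides b c a =
        (a + b) * ((c + a - b) * (b + c - a)) / (2 * a * b * c) := by
      rw [cosOfSides, cosOfSides]
      field_simp
      ring
    rw [h]
    have := mul_pos (sub_pos.2 hca) (sub_pos.2 hbc)
    positivity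
  have hcos : cosOfSides a b c * cosOfSides b c a -
      √(1 - cosOfSides a b c ^ 2) * √(1 - cosOfSides b c a ^ 2) = -cosOfSides c a b := by
    rw [sqrt_one_sub_cosOfSides_sq hb hc, sqrt_one_sub_cosOfSides_sq hc ha,
      show (b + c + a) * (c + a - b) * (a + b - c) * (b + c - a) =
        (a + b + c) * (b + c - a) * (c + a - b) * (a + b - c) by ring,
      div_mul_div_comm (√_), mul_self_sqrt hH, cosOfSides, cosOfSides, cosOfSides]
    field_simp
    ring
  rw [arccos_add_arccos_eq_pi_sub_arccos
    (cosOfSides_mem_Icc hb hc hbc.le (by linarith) (by linarith))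
    (cosOfSides_mem_Icc hc ha hca.le (by linarith) (by linarith)) hsum hcos]
  ring

theorem arccos_cosOfSides_cyclic_sum {a b c : ℝ} (ha : 0 < a) (hb : 0 < b) (hc : 0 < c) :
    arccos (cosOfSides a b c) + arccos (cosOfSides b c a) + arccos (cosOfSides c a b) = π := by
  by_cases hbc : b + c ≤ a
  · rw [arccos_cosOfSides_eq_pi hb hc hbc, arccos_cosOfSides_eq_zero hc ha (by nlinarith),
      arccos_cosOfSides_eq_zero ha hb (by nlinarith)]
    ring
  by_cases hca : c + a ≤ b
  · rw [arccos_cosOfSides_eq_pi hc ha hca, arccos_cosOfSides_eq_zero hb hc (by nlinarith),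
      arccos_cosOfSides_eq_zero ha hb (by nlinarith)]
    ring
  by_cases hab : a + b ≤ c
  · rw [arccos_cosOfSides_eq_pi ha hb hab, arccos_cosOfSides_eq_zero hb hc (by nlinarith),
      arccos_cosOfSides_eq_zero hc ha (by nlinarith)]
    ring
  exact arccos_cosOfSides_cyclic_sum_of_lt ha hb hc (by linarith) (by linarith) (by linarith)

theorem ang_add_ang_add_ang {x : Fin 3 → ℝ} (hx : ∀ i, 0 < x i) :
    ang 0 x + ang 1 x + ang 2 x = π :=
  arccos_cosOfSides_cyclic_sum (hx 0) (hx 1) (hx 2)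

theorem continuous_dihed (m : Fin 6) : Continuous (dihed m) := by
  have hexp (i : Fin 3) : Continuous fun l : Fin 6 → ℝ => exp (quadLen l i) := by
    unfold quadLen
    fun_prop
  refine continuous_arccos.comp (Continuous.div (by fun_prop) (by fun_prop) fun l => ?_)
  positivity

theorem tvol_eq_Lob_add_Lob_add_Lob (l : Fin 6 → ℝ) :
    tvol l = Lob (ang 0 fun i => exp (quadLen l i)) + Lob (ang 1 fun i => exp (quadLen l i))
      + Lob (ang 2 fun i => exp (quadLen l i)) := by
  have hq : quadOf 0 = 0 ∧ quadOf 1 = 1 ∧ quadOf 2 = 2 ∧ quadOf 3 = 2 ∧ quadOf 4 = 1 ∧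
      quadOf 5 = 0 := by
    decide
  simp only [tvol, Fin.sum_univ_six, dihed, hq]
  ring

theorem stmt4 :
    (∀ m : Fin 6, Continuous (dihed m) ∧ ∀ l : Fin 6 → ℝ, dihed m l ∈ Set.Icc 0 Real.pi) ∧
    Continuous tvol ∧ ∀ l : Fin 6 → ℝ, 0 ≤ tvol l := by
  refine ⟨fun m => ⟨continuous_dihed m, fun l => ⟨arccos_nonneg _, arccos_le_pi _⟩⟩, ?_,
    fun l => ?_⟩
  · exact continuous_const.mul
      (continuous_finsetSum _ fun m _ => continuous_Lob.comp (continuous_dihed m))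
  · rw [tvol_eq_Lob_add_Lob_add_Lob]
    exact Lob_add_Lob_add_Lob_nonneg (arccos_nonneg _) (arccos_nonneg _) (arccos_nonneg _)
      (ang_add_ang_add_ang fun i => exp_pos _)
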